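/- arXiv:2209.11109 — 2 statements merged into one kernel-verified Lean document; each statement's English description precedes it below -/
import Mathlib

section
/- Let n ≥ 2 and k ≥ 1 be integers. If there exists a non-constant polynomial map S^n → S^{2k+1}, then there exists a non-constant polynomial map S^n → S^{2k}. -/
/-!
Compose a non-constant `F : S^n → S^{2k+1}` with a rotation `R` and the quadratic Hopf-type map
`h : S^{2k+1} → S^{2k}`, `(z, w) ↦ (|z|² - |w|², 2 z w)`. As `h (-u) = h u`, we need two values
`a, b` of `F` with `a ≠ ±b`: since `S^n` is connected, `⟪F ·, F x₀⟫` attains a value in `[0, 1)`.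
Two reflections send `a, b` to `e₀` and `c e₀ + s e₂` (`c = ⟪a, b⟫`, `s = √(1 - c²)`), where the
first coordinates of `h` are `1` and `c² - s² < 1`.
-/

open MvPolynomial

noncomputable section

/-- The unit sphere `S^n ⊂ ℝ^{n+1}`, as the set of points with sum of squared coordinates 1. -/
def sphereSet (n : ℕ) : Set (Fin (n + 1) → ℝ) := {x | ∑ i, x i ^ 2 = 1}

/-- Each component of `F` is (the evaluation of) a real polynomial. -/
def IsPolyFun {n m : ℕ} (F : (Fin n → ℝ) → (Fin m → ℝ)) : Prop :=
  ∀ j, ∃ p : MvPolynomial (Fin n) ℝ, ∀ x, F x j = eval x p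

/-- A polynomial map `S^n → S^r`: a polynomial map `ℝ^{n+1} → ℝ^{r+1}` sending the sphere to
the sphere. -/
def IsSpherePolyMap (n r : ℕ) (F : (Fin (n + 1) → ℝ) → (Fin (r + 1) → ℝ)) : Prop :=
  IsPolyFun F ∧ ∀ x ∈ sphereSet n, F x ∈ sphereSet r

/-- `F` is non-constant on the set `s`. -/
def NonconstOn {α β : Type*} (s : Set α) (F : α → β) : Prop :=
  ∃ x ∈ s, ∃ y ∈ s, F x ≠ F y

/-- There exists a polynomial map `S^n → S^r` which is non-constant on `S^n`. -/
def ExistsNonconstPolyMap (n r : ℕ) : Prop :=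
  ∃ F : (Fin (n + 1) → ℝ) → (Fin (r + 1) → ℝ),
    IsSpherePolyMap n r F ∧ NonconstOn (sphereSet n) F

/-- `q n` is the least `r ≥ 1` for which there exists a non-constant polynomial map
`S^n → S^r`. -/
def q (n : ℕ) : ℕ := sInf {r | 1 ≤ r ∧ ExistsNonconstPolyMap n r}

open scoped RealInnerProductSpace

lemma IsPolyFun.comp {l m r : ℕ} {F : (Fin l → ℝ) → Fin m → ℝ} {G : (Fin m → ℝ) → Fin r → ℝ}
    (hG : IsPolyFun G) (hF : IsPolyFun F) : IsPolyFun (G ∘ F) := by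
  choose p hp using hF
  intro j
  obtain ⟨g, hg⟩ := hG j
  refine ⟨bind₁ p g, fun x => ?_⟩
  rw [Function.comp_apply, hg, show F x = fun i => eval x (p i) from funext fun i => hp i x]
  exact (eval₂Hom_bind₁ _ _ _ _).symm

lemma IsPolyFun.continuous {m r : ℕ} {F : (Fin m → ℝ) → Fin r → ℝ} (hF : IsPolyFun F) :
    Continuous F :=
  continuous_pi fun j => by
    obtain ⟨p, hp⟩ := hF j
    simpa only [hp] using MvPolynomial.continuous_eval p

lemma LinearMap.isPolyFun {m r : ℕ} (L : (Fin m → ℝ) →ₗ[ℝ] Fin r → ℝ) : IsPolyFun L := by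
  intro j
  refine ⟨∑ i, C (L (fun k => if i = k then 1 else 0) j) * X i, fun x => ?_⟩
  rw [L.pi_apply_eq_sum_univ x]
  simp [mul_comm]

lemma IsSpherePolyMap.comp {l m r : ℕ} {F : (Fin (l + 1) → ℝ) → Fin (m + 1) → ℝ}
    {G : (Fin (m + 1) → ℝ) → Fin (r + 1) → ℝ} (hG : IsSpherePolyMap m r G)
    (hF : IsSpherePolyMap l m F) : IsSpherePolyMap l r (G ∘ F) :=
  ⟨hG.1.comp hF.1, fun x hx => hG.2 _ (hF.2 x hx)⟩

lemma mem_sphereSet_iff_norm {n : ℕ} {x : Fin (n + 1) → ℝ} :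
    x ∈ sphereSet n ↔ ‖WithLp.toLp 2 x‖ = 1 := by
  rw [← pow_eq_one_iff_of_nonneg (norm_nonneg _) two_ne_zero, EuclideanSpace.real_norm_sq_eq]
  rfl

lemma isPreconnected_sphereSet {n : ℕ} (hn : 1 ≤ n) : IsPreconnected (sphereSet n) := by
  have hrank : 1 < Module.rank ℝ (EuclideanSpace ℝ (Fin (n + 1))) := by
    rw [← Module.finrank_eq_rank, finrank_euclideanSpace_fin]
    exact_mod_cast Nat.succ_lt_succ hn
  have : sphereSet n = WithLp.ofLp '' Metric.sphere (0 : EuclideanSpace ℝ (Fin (n + 1))) 1 := by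
    ext x
    rw [mem_sphereSet_iff_norm]
    constructor
    · intro hx; exact ⟨WithLp.toLp 2 x, by simpa using hx, rfl⟩
    · rintro ⟨y, hy, rfl⟩; simpa using hy
  rw [this]
  exact ((isConnected_sphere hrank 0 zero_le_one).image _
    (PiLp.continuous_ofLp 2 _).continuousOn).isPreconnected

lemma exists_abs_inner_lt_one_of_nonconstOn {X E : Type*} [TopologicalSpace X]
    [NormedAddCommGroup E] [InnerProductSpace ℝ E] {s : Set X} (hs : IsPreconnected s)
    {f : X → E} (hf : ContinuousOn f s) (hnorm : ∀ x ∈ s, ‖f x‖ = 1) (hnc : NonconstOn s f) :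
    ∃ x ∈ s, ∃ y ∈ s, |⟪f x, f y⟫| < 1 := by
  obtain ⟨x, hx, y, hy, hxy⟩ := hnc
  set g : X → ℝ := fun z => ⟪f z, f x⟫
  have hgx : g x = 1 := inner_self_eq_one_of_norm_eq_one (hnorm x hx)
  have hgy : g y < 1 := (inner_lt_one_iff_real_of_norm_eq_one (hnorm y hy) (hnorm x hx)).2 hxy.symm
  have hgy' : -1 ≤ g y := neg_one_le_real_inner_of_norm_eq_one (hnorm y hy) (hnorm x hx)
  -- the midpoint of `[g y, g x]` lies in `[0, 1)`
  obtain ⟨z, hz, hgz⟩ : (g y + 1) / 2 ∈ g '' s :=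
    hs.intermediate_value hy hx (hf.inner continuousOn_const) ⟨by linarith, by linarith⟩
  exact ⟨z, hz, x, hx, abs_lt.2 ⟨by linarith, by linarith⟩⟩

lemma exists_linearIsometryEquiv_apply_eq_pair {E : Type*} [NormedAddCommGroup E]
    [InnerProductSpace ℝ E] {a b p q : E} (hap : ‖a‖ = ‖p‖) (hbq : ‖b‖ = ‖q‖)
    (hinner : ⟪a, b⟫ = ⟪p, q⟫) : ∃ R : E ≃ₗᵢ[ℝ] E, R a = p ∧ R b = q := by
  set R₁ := Submodule.reflection (ℝ ∙ (a - p))ᗮ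
  have hR₁a : R₁ a = p := Submodule.reflection_sub hap
  set R₂ := Submodule.reflection (ℝ ∙ (R₁ b - q))ᗮ
  have hR₂b : R₂ (R₁ b) = q := Submodule.reflection_sub (by rw [LinearIsometryEquiv.norm_map, hbq])
  have hp : p ∈ (ℝ ∙ (R₁ b - q))ᗮ := by
    have : ⟪p, R₁ b⟫ = ⟪p, q⟫ := by rw [← hinner, ← hR₁a, R₁.inner_map_map]
    rw [Submodule.mem_orthogonal_singleton_iff_inner_left, inner_sub_right, this, sub_self]
  refine ⟨R₁.trans R₂, ?_, hR₂b⟩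
  rw [LinearIsometryEquiv.trans_apply, hR₁a]
  exact Submodule.reflection_mem_subspace_eq_self hp

lemma LinearIsometryEquiv.isSpherePolyMap {m : ℕ}
    (R : EuclideanSpace ℝ (Fin (m + 1)) ≃ₗᵢ[ℝ] EuclideanSpace ℝ (Fin (m + 1))) :
    IsSpherePolyMap m m fun x => (R (WithLp.toLp 2 x)).ofLp := by
  refine ⟨LinearMap.isPolyFun ((WithLp.linearEquiv 2 ℝ _).toLinearMap ∘ₗ R.toLinearMap ∘ₗ
    (WithLp.linearEquiv 2 ℝ _).symm.toLinearMap), fun x hx => ?_⟩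
  rw [mem_sphereSet_iff_norm] at hx ⊢
  simpa using hx

/-- An orthogonal map with square `-1`: `i` and `rev i` have opposite parities. -/
def complexStructure {k : ℕ} (v : Fin (2 * k) → ℝ) : Fin (2 * k) → ℝ :=
  fun i => (-1) ^ (i : ℕ) * v i.rev

lemma neg_one_pow_val_rev {R : Type*} [Ring R] {k : ℕ} (i : Fin (2 * k)) :
    (-1 : R) ^ (i.rev : ℕ) = -(-1) ^ (i : ℕ) := by
  have h : (i.rev : ℕ) + i + 1 = 2 * k := by rw [Fin.val_rev]; omega
  rcases Nat.even_or_odd (i : ℕ) with hi | hi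
  · rw [hi.neg_one_pow, Odd.neg_one_pow (Nat.odd_iff.2 (by rw [Nat.even_iff] at hi; omega))]
  · rw [hi.neg_one_pow, neg_neg,
      Even.neg_one_pow (Nat.even_iff.2 (by rw [Nat.odd_iff] at hi; omega))]

lemma sum_mul_complexStructure {k : ℕ} (v : Fin (2 * k) → ℝ) :
    ∑ i, v i * complexStructure v i = 0 := by
  have h := Fintype.sum_equiv Fin.revPerm (fun i => v i * complexStructure v i)
    (fun i => -(v i * complexStructure v i)) fun i => by
      simp only [complexStructure, Fin.revPerm_apply, Fin.rev_rev, neg_one_pow_val_rev]; ring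
  rw [Finset.sum_neg_distrib] at h
  linarith

lemma sum_complexStructure_sq {k : ℕ} (v : Fin (2 * k) → ℝ) :
    ∑ i, complexStructure v i ^ 2 = ∑ i, v i ^ 2 :=
  Fintype.sum_equiv Fin.revPerm _ _ fun i => by
    rw [complexStructure, mul_pow, ← pow_mul, pow_mul', neg_one_sq, one_pow, one_mul]; rfl

/-- The Hopf construction `(z, w) ↦ (|z|² - |w|², 2 z w)` for `z = (x 0, x 1) ∈ ℂ` and
`w ∈ ℝ^{2k}`, on which `z` acts through `complexStructure`; its squared norm is
`(|z|² + |w|²)²`. -/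
def hopfMap (k : ℕ) (x : Fin (2 * k + 2) → ℝ) : Fin (2 * k + 1) → ℝ :=
  Fin.cons (x 0 ^ 2 + x 1 ^ 2 - ∑ i, Fin.tail (Fin.tail x) i ^ 2) fun i =>
    2 * (x 0 * Fin.tail (Fin.tail x) i + x 1 * complexStructure (Fin.tail (Fin.tail x)) i)

lemma sum_hopfMap_sq (k : ℕ) (x : Fin (2 * k + 2) → ℝ) :
    ∑ i, hopfMap k x i ^ 2 = (∑ i, x i ^ 2) ^ 2 := by
  set v := Fin.tail (Fin.tail x)
  have hx : ∑ i, x i ^ 2 = x 0 ^ 2 + x 1 ^ 2 + ∑ i, v i ^ 2 := by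
    rw [Fin.sum_univ_succ, Fin.sum_univ_succ, ← add_assoc]; rfl
  have hsucc : ∀ i, hopfMap k x i.succ = 2 * (x 0 * v i + x 1 * complexStructure v i) :=
    fun _ => rfl
  have hexpand : ∑ i, (x 0 * v i + x 1 * complexStructure v i) ^ 2
      = x 0 ^ 2 * ∑ i, v i ^ 2 + x 1 ^ 2 * ∑ i, complexStructure v i ^ 2
        + 2 * x 0 * x 1 * ∑ i, v i * complexStructure v i := by
    simp only [Finset.mul_sum, ← Finset.sum_add_distrib]
    exact Finset.sum_congr rfl fun i _ => by ring
  rw [Fin.sum_univ_succ, Fintype.sum_congr _ _ fun i => congrArg (· ^ 2) (hsucc i)]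
  simp only [mul_pow, ← Finset.mul_sum, hexpand, sum_mul_complexStructure,
    sum_complexStructure_sq, hx]
  show (x 0 ^ 2 + x 1 ^ 2 - ∑ i, v i ^ 2) ^ 2 + _ = _
  ring

lemma isPolyFun_hopfMap (k : ℕ) : IsPolyFun (hopfMap k) := by
  refine Fin.cases ⟨X 0 ^ 2 + X 1 ^ 2 - ∑ i : Fin (2 * k), X i.succ.succ ^ 2, fun x => ?_⟩
    fun i => ⟨C 2 * (X 0 * X i.succ.succ + C ((-1) ^ (i : ℕ)) * X 1 * X i.rev.succ.succ),
      fun x => ?_⟩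
  · simp [hopfMap, Fin.tail]
  · simp [hopfMap, Fin.tail, complexStructure]; ring

lemma isSpherePolyMap_hopfMap (k : ℕ) : IsSpherePolyMap (2 * k + 1) (2 * k) (hopfMap k) :=
  ⟨isPolyFun_hopfMap k, fun x hx => by
    simp only [sphereSet, Set.mem_ofPred_eq] at hx ⊢
    rw [sum_hopfMap_sq, hx, one_pow]⟩

lemma exists_isSpherePolyMap_ne {k : ℕ} (hk : 1 ≤ k) {a b : Fin (2 * k + 2) → ℝ}
    (ha : a ∈ sphereSet (2 * k + 1)) (hb : b ∈ sphereSet (2 * k + 1))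
    (hab : |⟪WithLp.toLp 2 a, WithLp.toLp 2 b⟫| < 1) :
    ∃ G, IsSpherePolyMap (2 * k + 1) (2 * k) G ∧ G a ≠ G b := by
  set c := ⟪WithLp.toLp 2 a, WithLp.toLp 2 b⟫
  set s := √(1 - c ^ 2)
  have hs : s ^ 2 = 1 - c ^ 2 := Real.sq_sqrt (by nlinarith [abs_lt.1 hab])
  -- unit vectors with `⟪p, q⟫ = c`, where `hopfMap` has first coordinates `1` and `c² - s²`
  set p : Fin (2 * k + 2) → ℝ := Fin.cons 1 0
  set i₀ : Fin (2 * k) := ⟨0, by omega⟩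
  set q : Fin (2 * k + 2) → ℝ := Fin.cons c (Fin.cons 0 (Pi.single i₀ s))
  have hsingle : ∑ i, Pi.single i₀ s i ^ 2 = s ^ 2 := by
    rw [Fintype.sum_eq_single i₀ fun i hi => by simp [hi]]
    simp
  have hp : ‖WithLp.toLp 2 p‖ = 1 := by
    rw [← mem_sphereSet_iff_norm]
    simp [sphereSet, p, Fin.sum_univ_succ]
  have hq : ‖WithLp.toLp 2 q‖ = 1 := by
    rw [← mem_sphereSet_iff_norm]
    simp [sphereSet, q, Fin.sum_univ_succ, hsingle, hs]
  have hpq : ⟪WithLp.toLp 2 p, WithLp.toLp 2 q⟫ = c := by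
    simp [PiLp.inner_apply, p, q, Fin.sum_univ_succ]
  obtain ⟨R, hRa, hRb⟩ := exists_linearIsometryEquiv_apply_eq_pair
    (by rw [hp, ← mem_sphereSet_iff_norm.1 ha]) (by rw [hq, ← mem_sphereSet_iff_norm.1 hb])
    hpq.symm
  refine ⟨hopfMap k ∘ fun x => (R (WithLp.toLp 2 x)).ofLp,
    (isSpherePolyMap_hopfMap k).comp R.isSpherePolyMap, fun h => ?_⟩
  have h0 : 1 = c ^ 2 - s ^ 2 := by
    simpa [hRa, hRb, hopfMap, p, q, Fin.tail, hsingle] using congrFun h 0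
  nlinarith [abs_lt.1 hab]

/-- If `n ≥ 2`, `k ≥ 1`, and there exists a non-constant polynomial map `S^n → S^{2k+1}`,
then there exists a non-constant polynomial map `S^n → S^{2k}`. -/
theorem nonconst_poly_map_odd_to_even (n k : ℕ) (hn : 2 ≤ n) (hk : 1 ≤ k)
    (h : ExistsNonconstPolyMap n (2 * k + 1)) : ExistsNonconstPolyMap n (2 * k) := by
  obtain ⟨F, hF, x₀, hx₀, y₀, hy₀, hne⟩ := h
  obtain ⟨x, hx, y, hy, hxy⟩ := exists_abs_inner_lt_one_of_nonconstOn
    (isPreconnected_sphereSet (by omega : 1 ≤ n))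
    ((PiLp.continuous_toLp 2 _).comp hF.1.continuous).continuousOn
    (fun x hx => mem_sphereSet_iff_norm.1 (hF.2 x hx))
    ⟨x₀, hx₀, y₀, hy₀, fun h => hne (congrArg WithLp.ofLp h)⟩
  obtain ⟨G, hG, hGxy⟩ := exists_isSpherePolyMap_ne hk (hF.2 x hx) (hF.2 y hy) hxy
  exact ⟨G ∘ F, hG.comp hF, x, hx, y, hy, hGxy⟩
end
end

section
/- Let d, m ≥ 1 be integers and let J₁, …, J_{m−1} be linear isometries of Euclidean space ℝ^d satisfying J_i² = −id for all i and J_i J_j = −J_j J_i for all i ≠ j. Set J₀ = id and define F : ℝ^d × ℝ^m → ℝ^d by F(x, y) = Σ_{i=0}^{m−1} y_i J_i x, where y = (y_0, …, y_{m−1}). Then F is bilinear and satisfies ‖F(x,y)‖² = ‖x‖²‖y‖² for all x ∈ ℝ^d and y ∈ ℝ^m. -/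
/-- Let `J₀ = id` and let `J₁, …, J_{m-1}` be linear isometries of `ℝ^d` (norm-preserving
linear maps) with `Jᵢ² = -id` and `Jᵢ Jⱼ = -Jⱼ Jᵢ` for `i ≠ j` (`i, j ≥ 1`). Then
`F(x, y) = ∑ᵢ yᵢ • Jᵢ x` is bilinear and satisfies `‖F(x,y)‖² = ‖x‖² ‖y‖²`. -/
theorem clifford_bilinear_norm_multiplicative (d m : ℕ) (hd : 1 ≤ d) (hm : 0 < m)
    (J : Fin m → ((Fin d → ℝ) →ₗ[ℝ] (Fin d → ℝ)))
    (hJ0 : J ⟨0, hm⟩ = LinearMap.id)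
    (hiso : ∀ (i : Fin m) (x : Fin d → ℝ), ∑ k, J i x k ^ 2 = ∑ k, x k ^ 2)
    (hsq : ∀ i : Fin m, (i : ℕ) ≠ 0 → J i ∘ₗ J i = -LinearMap.id)
    (hanti : ∀ i j : Fin m, (i : ℕ) ≠ 0 → (j : ℕ) ≠ 0 → i ≠ j → J i ∘ₗ J j = -(J j ∘ₗ J i))
    (F : (Fin d → ℝ) → (Fin m → ℝ) → (Fin d → ℝ))
    (hFdef : ∀ x y, F x y = ∑ i, y i • J i x) :
    (∀ (c : ℝ) (x x' : Fin d → ℝ) (y : Fin m → ℝ),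
        F (c • x + x') y = c • F x y + F x' y) ∧
    (∀ (c : ℝ) (x : Fin d → ℝ) (y y' : Fin m → ℝ),
        F x (c • y + y') = c • F x y + F x y') ∧
    (∀ (x : Fin d → ℝ) (y : Fin m → ℝ),
        ∑ k, F x y k ^ 2 = (∑ k, x k ^ 2) * ∑ i, y i ^ 2) := by
  -- inner product
  set ip : (Fin d → ℝ) → (Fin d → ℝ) → ℝ := fun u v => ∑ k, u k * v k with hip
  have ip_symm : ∀ u v, ip u v = ip v u := by
    intro u v; simp only [hip]; exact Finset.sum_congr rfl fun k _ => mul_comm _ _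
  have ip_self : ∀ u, ip u u = ∑ k, u k ^ 2 := by
    intro u; simp only [hip, sq]
  -- J i preserves inner products
  have hiso' : ∀ (i : Fin m) (u v : Fin d → ℝ), ip (J i u) (J i v) = ip u v := by
    intro i u v
    have h1 := hiso i (u + v)
    have h2 := hiso i u
    have h3 := hiso i v
    have expand : ∀ a b : Fin d → ℝ,
        ∑ k, (a k + b k) ^ 2 = (∑ k, a k ^ 2) + 2 * ip a b + ∑ k, b k ^ 2 := by
      intro a b
      simp only [hip, Finset.mul_sum, ← Finset.sum_add_distrib]
      exact Finset.sum_congr rfl fun k _ => by ring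
    simp only [map_add, Pi.add_apply] at h1
    rw [expand, expand, h2, h3] at h1
    linarith
  -- J i negated: J i (J i x) = -x for i ≠ 0
  have hsq' : ∀ (i : Fin m), (i : ℕ) ≠ 0 → ∀ x, J i (J i x) = -x := by
    intro i hi x
    have := congrArg (fun f => f x) (hsq i hi)
    simpa using this
  -- orthogonality
  have horth : ∀ (i j : Fin m) (x : Fin d → ℝ), i ≠ j → ip (J i x) (J j x) = 0 := by
    intro i j x hij
    by_cases hi : (i : ℕ) = 0
    · have hieq : i = ⟨0, hm⟩ := Fin.ext hi
      have hj : (j : ℕ) ≠ 0 := fun hj => hij (by rw [hieq]; exact (Fin.ext hj).symm)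
      have h1 : ip (J i x) (J j x) = ip x (J j x) := by rw [hieq, hJ0]; rfl
      have h2 : ip x (J j x) = ip (J j x) (J j (J j x)) := (hiso' j x (J j x)).symm
      have h3 : ip (J j x) (J j (J j x)) = ip (J j x) (-x) := by rw [hsq' j hj]
      have h4 : ip (J j x) (-x) = -ip x (J j x) := by
        rw [ip_symm]; simp only [hip, ← Finset.sum_neg_distrib]
        exact Finset.sum_congr rfl fun k _ => by simp only [Pi.neg_apply]; ring
      rw [h1]; have := h2.trans (h3.trans h4); linarith
    · by_cases hj : (j : ℕ) = 0
      · have hjeq : j = ⟨0, hm⟩ := Fin.ext hj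
        have h1 : ip (J i x) (J j x) = ip x (J i x) := by
          rw [hjeq, hJ0, ip_symm]; rfl
        have h2 : ip x (J i x) = ip (J i x) (J i (J i x)) := (hiso' i x (J i x)).symm
        have h3 : ip (J i x) (J i (J i x)) = -ip x (J i x) := by
          rw [hsq' i hi, ip_symm]; simp only [hip, ← Finset.sum_neg_distrib]
          exact Finset.sum_congr rfl fun k _ => by simp only [Pi.neg_apply]; ring
        rw [h1]; have := h2.trans h3; linarith
      · -- both nonzero
        have hneg : ∀ u v : Fin d → ℝ, ip (-u) v = -ip u v := by
          intro u v; simp only [hip, ← Finset.sum_neg_distrib]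
          exact Finset.sum_congr rfl fun k _ => by simp only [Pi.neg_apply]; ring
        have e1 : ip (J i x) (J j x) = -ip x (J i (J j x)) := by
          rw [← hiso' i (J i x) (J j x), hsq' i hi, hneg]
        have e2 : ip (J i x) (J j x) = ip x (J i (J j x)) := by
          rw [ip_symm, ← hiso' j (J j x) (J i x), hsq' j hj, hneg]
          have : J j (J i x) = -(J i (J j x)) := by
            have := congrArg (fun f => f x) (hanti i j hi hj hij)
            simp only [LinearMap.comp_apply, LinearMap.neg_apply] at this
            rw [this]; simp
          rw [this]; rw [ip_symm x, hneg, ip_symm]; ring_nf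
        linarith [e1, e2]
  refine ⟨?_, ?_, ?_⟩
  · intro c x x' y
    simp only [hFdef, map_add, map_smul, smul_add, Finset.sum_add_distrib, Finset.smul_sum,
      smul_comm c]
  · intro c x y y'
    simp only [hFdef, Pi.add_apply, Pi.smul_apply, smul_eq_mul, add_smul, mul_smul,
      Finset.sum_add_distrib, Finset.smul_sum]
  · intro x y
    have hFk : ∀ k, F x y k = ∑ i, y i * J i x k := by
      intro k; rw [hFdef]; simp [Finset.sum_apply]
    calc ∑ k, F x y k ^ 2 = ∑ k, (∑ i, y i * J i x k) * (∑ j, y j * J j x k) := by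
          exact Finset.sum_congr rfl fun k _ => by rw [hFk, sq]
      _ = ∑ k, ∑ i, ∑ j, (y i * J i x k) * (y j * J j x k) := by
          exact Finset.sum_congr rfl fun k _ => by rw [Finset.sum_mul_sum]
      _ = ∑ i, ∑ j, y i * y j * ip (J i x) (J j x) := by
          rw [Finset.sum_comm]
          refine Finset.sum_congr rfl fun i _ => ?_
          rw [Finset.sum_comm]
          refine Finset.sum_congr rfl fun j _ => ?_
          simp only [hip, Finset.mul_sum]
          exact Finset.sum_congr rfl fun k _ => by ring
      _ = ∑ i, y i ^ 2 * ip x x := by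
          refine Finset.sum_congr rfl fun i _ => ?_
          rw [Finset.sum_eq_single i]
          · rw [hiso' i x x]; ring
          · intro j _ hji; rw [horth i j x (Ne.symm hji)]; ring
          · intro h; exact absurd (Finset.mem_univ i) h
      _ = (∑ k, x k ^ 2) * ∑ i, y i ^ 2 := by
          rw [ip_self, ← Finset.sum_mul, mul_comm]
end
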